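/- arXiv:1303.0433 — 2 statements merged into one kernel-verified Lean document; each statement's English description precedes it below -/
import Mathlib

section
/- Let α be a finite partially ordered set, and model the one-point extension of α by a new element as Option α (the new maximal element being none). The map sending an antichain A of α to the partial order on Option α defined by: some u ≤ some v iff u ≤ v in α, some u < none iff u ≤ c for some c ∈ A, and none ≤ none, is a bijection from the set of antichains of α onto the set of partial orders on Option α whose restriction along some equals the order of α and in which none is a maximal element. (Hence the number of labeled offspring of a labeled causet x equals the number of distinct antichains in x.) -/
/-!
An order on `Option α` that extends `α` and has `none` maximal is determined by the set
`{u | some u ≤ none}`, which is a lower set of `α`. In a finite poset, lower sets correspond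
bijectively to antichains: a lower set is the lower closure of its maximal elements, and an
antichain is the set of maximal elements of its lower closure.
-/

/-- The one-point extension of the order of `α` determined by an antichain `A`:
the new element `none` is maximal, `some u ≤ some v` iff `u ≤ v` in `α`, and
`some u ≤ none` iff `u ≤ c` for some `c ∈ A`. -/
def extOrder {α : Type*} [PartialOrder α] (A : Set α) :
    Option α → Option α → Prop
  | some u, some v => u ≤ v
  | some u, none => ∃ c ∈ A, u ≤ c
  | none, some _ => False
  | none, none => True

theorem IsLowerSet.lowerClosure_setOf_maximal {α : Type*} [Preorder α] [WellFoundedGT α]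
    {S : Set α} (hS : IsLowerSet S) : (lowerClosure {x | Maximal (· ∈ S) x} : Set α) = S := by
  ext x
  constructor
  · rintro ⟨b, hb, hxb⟩
    exact hS hxb hb.prop
  · intro hx
    obtain ⟨b, hxb, hb⟩ := exists_maximal_ge_of_wellFoundedGT (· ∈ S) x hx
    exact ⟨b, hb, hxb⟩

section extOrder

variable {α : Type*} [PartialOrder α] {A : Set α}

theorem extOrder_some_none_iff {u : α} : extOrder A (some u) none ↔ u ∈ lowerClosure A :=
  mem_lowerClosure.symm

theorem eq_none_of_extOrder_none {z : Option α} (h : extOrder A none z) : z = none := by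
  cases z
  · rfl
  · exact h.elim

theorem isPartialOrder_extOrder (A : Set α) : IsPartialOrder (Option α) (extOrder A) where
  refl
    | some u => le_refl u
    | none => trivial
  trans
    | some _, some _, some _, h₁, h₂ => le_trans h₁ h₂
    | some _, some _, none, h₁, ⟨c, hc, h₂⟩ => ⟨c, hc, h₁.trans h₂⟩
    | some _, none, none, h, _ => h
    | none, none, none, _, _ => trivial
    | _, none, some _, _, h => h.elim
    | none, some _, _, h, _ => h.elim
  antisymm
    | some _, some _, h₁, h₂ => congrArg some (le_antisymm h₁ h₂)
    | none, none, _, _ => rfl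
    | some _, none, _, h => h.elim
    | none, some _, h, _ => h.elim

theorem eq_extOrder {r : Option α → Option α → Prop}
    (hsome : ∀ u v : α, r (some u) (some v) ↔ u ≤ v)
    (hlower : ∀ u : α, r (some u) none ↔ u ∈ lowerClosure A)
    (hnone : ∀ z : Option α, r none z → z = none) (hrefl : r none none) :
    r = extOrder A := by
  funext x y
  apply propext
  cases x with
  | some u =>
    cases y with
    | some v => exact hsome u v
    | none => exact (hlower u).trans extOrder_some_none_iff.symm
  | none =>
    cases y with
    | some v => exact iff_of_false (fun h => Option.some_ne_none v (hnone _ h)) id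
    | none => exact iff_of_true hrefl trivial

theorem extOrder_injOn : Set.InjOn (extOrder (α := α)) {A : Set α | IsAntichain (· ≤ ·) A} := by
  intro A hA B hB hAB
  have hclosure : lowerClosure A = lowerClosure B := SetLike.ext fun u => by
    rw [← extOrder_some_none_iff, hAB, extOrder_some_none_iff]
  ext x
  rw [← hA.maximal_mem_lowerClosure_iff_mem, ← hB.maximal_mem_lowerClosure_iff_mem, hclosure]

theorem extOrder_surjOn [WellFoundedGT α] :
    Set.SurjOn (extOrder (α := α))
      {A : Set α | IsAntichain (· ≤ ·) A}
      {r : Option α → Option α → Prop |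
        IsPartialOrder (Option α) r ∧
        (∀ u v : α, r (some u) (some v) ↔ u ≤ v) ∧
        (∀ z : Option α, r none z → z = none)} := by
  rintro r ⟨hr, hsome, hnone⟩
  set S : Set α := {u | r (some u) none}
  have hS : IsLowerSet S := fun u v hvu hu => hr.trans _ _ _ ((hsome v u).2 hvu) hu
  refine ⟨{x | Maximal (· ∈ S) x}, setOfPred_maximal_antichain _, Eq.symm ?_⟩
  refine eq_extOrder hsome (fun u => ?_) hnone (hr.refl none)
  rw [← SetLike.mem_coe, hS.lowerClosure_setOf_maximal]
  rfl

end extOrder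

/-- The map sending an antichain `A` of a finite poset `α` to the partial order
`extOrder A` on `Option α` is a bijection from the set of antichains of `α` onto
the set of partial orders on `Option α` whose restriction along `some` is the
order of `α` and in which `none` is maximal. -/
theorem antichain_extension_bijOn {α : Type*} [Fintype α] [PartialOrder α] :
    Set.BijOn (extOrder (α := α))
      {A : Set α | IsAntichain (· ≤ ·) A}
      {r : Option α → Option α → Prop |
        IsPartialOrder (Option α) r ∧
        (∀ u v : α, r (some u) (some v) ↔ u ≤ v) ∧
        (∀ z : Option α, r none z → z = none)} :=
  ⟨fun A _ => ⟨isPartialOrder_extOrder A, fun _ _ => Iff.rfl, fun _ => eq_none_of_extOrder_none⟩,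
    extOrder_injOn, extOrder_surjOn⟩
end

section
/- Let a be a transition amplitude on labeled causets with path amplitudes a_n, and for subsets A, B of the set of n-paths define the decoherence functional D_n(A, B) = (∑_{ω ∈ A} a_n(ω)) · conj(∑_{ω' ∈ B} a_n(ω')). For a set A of n-paths let ext(A) denote the set of (n+1)-paths whose first n entries form an n-path belonging to A. Then for all subsets A, B of the set of n-paths, D_{n+1}(ext(A), ext(B)) = D_n(A, B); i.e. the decoherence functionals of the amplitude process are consistent. -/
/-! An `(n+1)`-path extending a fixed `n`-path `ρ` (for `n ≥ 1`) is the same thing as a causet `y`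
with `ρ_n → y`, and its amplitude is `a_n(ρ) · a(ρ_n → y)`. Summing over these extensions therefore
gives `a_n(ρ) · ∑_{y : ρ_n → y} a(ρ_n → y) = a_n(ρ)`, so `∑_{ω ∈ ext A} a_{n+1}(ω) = ∑_{ρ ∈ A} a_n(ρ)`
and both factors of the decoherence functional are unchanged by `ext`. For `n = 0` there is a
single `1`-path, of amplitude `1`. -/

open ComplexConjugate
open scoped Classical

/-- A labeled causet of cardinality `n`: a partial order on `Fin n` that is
naturally labeled, i.e. `r i j` implies `i ≤ j` as natural numbers. -/
def LCauset (n : ℕ) : Type :=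
  {r : Fin n → Fin n → Prop // IsPartialOrder (Fin n) r ∧ ∀ i j : Fin n, r i j → (i : ℕ) ≤ j}

noncomputable instance (n : ℕ) : Fintype (LCauset n) := by
  unfold LCauset; infer_instance

/-- `x` produces `y` (written `x → y`) if the restriction of the order of `y`
to `Fin n` equals the order of `x`. -/
def Produces {n : ℕ} (x : LCauset n) (y : LCauset (n + 1)) : Prop :=
  ∀ i j : Fin n, x.1 i j ↔ y.1 i.castSucc j.castSucc

/-- An `n`-path: a sequence `ω₁ ω₂ ⋯ ω_n` where `ω_i` is a labeled causet of
cardinality `i` and `ω_i → ω_{i+1}`. -/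
def NPath (n : ℕ) : Type :=
  {ω : (i : Fin n) → LCauset ((i : ℕ) + 1) //
    ∀ (i : Fin n) (h : (i : ℕ) + 1 < n), Produces (ω i) (ω ⟨(i : ℕ) + 1, h⟩)}

noncomputable instance (n : ℕ) : Fintype (NPath n) := by
  unfold NPath; infer_instance

/-- The restriction of an `(n+1)`-path to its first `n` entries. -/
def NPath.res {n : ℕ} (ω : NPath (n + 1)) : NPath n :=
  ⟨fun i => ω.1 i.castSucc, fun i h => ω.2 i.castSucc (Nat.lt_succ_of_lt h)⟩

/-- The amplitude `a_n(ω) = a(ω₁ → ω₂)·a(ω₂ → ω₃)⋯a(ω_{n−1} → ω_n)` of an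
`n`-path `ω`. -/
noncomputable def pathAmp {n : ℕ} (a : ∀ m, LCauset m → LCauset (m + 1) → ℂ)
    (ω : NPath n) : ℂ :=
  ∏ i : Fin n,
    if h : (i : ℕ) + 1 < n then a ((i : ℕ) + 1) (ω.1 i) (ω.1 ⟨(i : ℕ) + 1, h⟩) else 1

/-- The decoherence functional of the amplitude process:
`D_n(A, B) = (∑_{ω ∈ A} a_n(ω)) · conj (∑_{ω' ∈ B} a_n(ω'))`. -/
noncomputable def decoherence {n : ℕ} (a : ∀ m, LCauset m → LCauset (m + 1) → ℂ)
    (A B : Finset (NPath n)) : ℂ :=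
  (∑ ω ∈ A, pathAmp a ω) * conj (∑ ω' ∈ B, pathAmp a ω')

/-- `ext A`: the set of `(n+1)`-paths whose first `n` entries form an `n`-path
belonging to `A`. -/
noncomputable def extPaths {n : ℕ} (A : Finset (NPath n)) : Finset (NPath (n + 1)) :=
  Finset.univ.filter (fun ω => ω.res ∈ A)

def IsTransitionAmplitude (a : ∀ m, LCauset m → LCauset (m + 1) → ℂ) : Prop :=
  ∀ (m : ℕ) (x : LCauset m), ∑ y ∈ Finset.univ.filter (fun y => Produces x y), a m x y = 1

def LCauset.chain (n : ℕ) : LCauset n :=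
  ⟨(· ≤ ·), inferInstance, fun _ _ h => h⟩

instance (n : ℕ) : Inhabited (LCauset n) := ⟨LCauset.chain n⟩

instance : Subsingleton (LCauset 1) where
  allEq := by
    rintro ⟨r, hr, -⟩ ⟨s, hs, -⟩
    apply Subtype.ext
    funext i j
    obtain rfl : i = j := Subsingleton.elim i j
    exact propext ⟨fun _ => hs.refl i, fun _ => hr.refl i⟩

instance : Unique (NPath 1) where
  default := ⟨fun _ => default, fun i h => absurd h (by omega)⟩
  uniq ω := by
    apply Subtype.ext
    funext i
    fin_cases i
    exact Subsingleton.elim (α := LCauset 1) _ _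

namespace NPath

def last {m : ℕ} (ω : NPath (m + 1)) : LCauset (m + 1) := ω.1 (Fin.last m)

lemma res_last_produces_last {m : ℕ} (ω : NPath (m + 2)) : Produces ω.res.last ω.last :=
  ω.2 (Fin.last m).castSucc (by simp)

def snoc {m : ℕ} (ρ : NPath (m + 1)) (y : LCauset (m + 2)) (hy : Produces ρ.last y) :
    NPath (m + 2) :=
  ⟨Fin.snoc (α := fun i => LCauset ((i : ℕ) + 1)) ρ.1 y, by
    intro i h
    obtain ⟨j, rfl⟩ : ∃ j : Fin (m + 1), j.castSucc = i :=
      Fin.exists_castSucc_eq.mpr (by rintro rfl; simp at h)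
    -- Each `show` makes the motive of `Fin.snoc` explicit so that its rewrite lemmas apply.
    rcases Fin.eq_castSucc_or_eq_last j with ⟨k, rfl⟩ | rfl
    · show Produces (Fin.snoc (α := fun i => LCauset ((i : ℕ) + 1)) ρ.1 y k.castSucc.castSucc)
        (Fin.snoc (α := fun i => LCauset ((i : ℕ) + 1)) ρ.1 y k.succ.castSucc)
      rw [Fin.snoc_castSucc, Fin.snoc_castSucc]
      exact ρ.2 k.castSucc (by simp)
    · show Produces (Fin.snoc (α := fun i => LCauset ((i : ℕ) + 1)) ρ.1 y (Fin.last m).castSucc)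
        (Fin.snoc (α := fun i => LCauset ((i : ℕ) + 1)) ρ.1 y (Fin.last (m + 1)))
      rw [Fin.snoc_castSucc, Fin.snoc_last]
      exact hy⟩

@[simp]
lemma res_snoc {m : ℕ} (ρ : NPath (m + 1)) (y : LCauset (m + 2)) (hy : Produces ρ.last y) :
    (ρ.snoc y hy).res = ρ :=
  Subtype.ext (Fin.init_snoc (α := fun i => LCauset ((i : ℕ) + 1)) ..)

@[simp]
lemma last_snoc {m : ℕ} (ρ : NPath (m + 1)) (y : LCauset (m + 2)) (hy : Produces ρ.last y) :
    (ρ.snoc y hy).last = y :=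
  Fin.snoc_last (α := fun i => LCauset ((i : ℕ) + 1)) ..

lemma snoc_res_last {m : ℕ} (ω : NPath (m + 2)) :
    ω.res.snoc ω.last ω.res_last_produces_last = ω :=
  Subtype.ext (Fin.snoc_init_self (α := fun i => LCauset ((i : ℕ) + 1)) ω.1)

end NPath

section Amplitudes

variable (a : ∀ m, LCauset m → LCauset (m + 1) → ℂ)

lemma pathAmp_eq_one_of_le_one {n : ℕ} (hn : n ≤ 1) (ω : NPath n) : pathAmp a ω = 1 :=
  Finset.prod_eq_one fun _ _ => dif_neg (by omega)

lemma sum_pathAmp_one : ∑ ω : NPath 1, pathAmp a ω = 1 := by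
  rw [Fintype.sum_unique, pathAmp_eq_one_of_le_one a le_rfl]

lemma pathAmp_succ {m : ℕ} (ω : NPath (m + 2)) :
    pathAmp a ω = pathAmp a ω.res * a (m + 1) ω.res.last ω.last := by
  unfold pathAmp
  rw [Fin.prod_univ_castSucc, Fin.prod_univ_castSucc, Fin.prod_univ_castSucc (n := m)]
  simp only [Fin.val_castSucc, Fin.val_last, lt_self_iff_false, dite_false, mul_one,
    show m + 1 < m + 2 by omega, dite_true]
  congr 1
  exact Finset.prod_congr rfl fun i _ => by
    rw [dif_pos (by omega), dif_pos (by omega)]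
    rfl

lemma sum_filter_res_eq_sum_produces {β : Type*} [AddCommMonoid β] {m : ℕ}
    (f : LCauset (m + 2) → β) (ρ : NPath (m + 1)) :
    ∑ ω ∈ Finset.univ.filter (fun ω : NPath (m + 2) => ω.res = ρ), f ω.last
      = ∑ y ∈ Finset.univ.filter (fun y => Produces ρ.last y), f y := by
  refine Finset.sum_bij' (fun ω _ => ω.last) (fun y hy => ρ.snoc y (Finset.mem_filter.mp hy).2)
    ?_ ?_ ?_ ?_ fun _ _ => rfl
  · rintro ω hω
    obtain rfl := (Finset.mem_filter.mp hω).2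
    simpa using ω.res_last_produces_last
  · intro y _
    simp
  · rintro ω hω
    obtain rfl := (Finset.mem_filter.mp hω).2
    exact ω.snoc_res_last
  · intro y _
    exact NPath.last_snoc ..

variable {a}

lemma sum_pathAmp_filter_res (ha : IsTransitionAmplitude a) {n : ℕ} (ρ : NPath n) :
    ∑ ω ∈ Finset.univ.filter (fun ω : NPath (n + 1) => ω.res = ρ), pathAmp a ω = pathAmp a ρ := by
  cases n with
  | zero =>
    rw [Finset.filter_true_of_mem fun ω _ =>
      show ω.res = ρ from Subtype.ext (funext fun i => i.elim0),
      pathAmp_eq_one_of_le_one a zero_le_one]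
    exact sum_pathAmp_one a
  | succ m =>
    calc ∑ ω ∈ Finset.univ.filter (fun ω : NPath (m + 2) => ω.res = ρ), pathAmp a ω
        = ∑ ω ∈ Finset.univ.filter (fun ω : NPath (m + 2) => ω.res = ρ),
            pathAmp a ρ * a (m + 1) ρ.last ω.last :=
          Finset.sum_congr rfl fun ω hω => by
            obtain rfl := (Finset.mem_filter.mp hω).2
            exact pathAmp_succ a ω
      _ = pathAmp a ρ *
            ∑ y ∈ Finset.univ.filter (fun y => Produces ρ.last y), a (m + 1) ρ.last y := by
          rw [← Finset.mul_sum, sum_filter_res_eq_sum_produces]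
      _ = pathAmp a ρ := by rw [ha, mul_one]

lemma sum_pathAmp_extPaths (ha : IsTransitionAmplitude a) {n : ℕ} (A : Finset (NPath n)) :
    ∑ ω ∈ extPaths A, pathAmp a ω = ∑ ρ ∈ A, pathAmp a ρ := by
  rw [extPaths, ← Finset.sum_fiberwise_eq_sum_filter Finset.univ A NPath.res]
  exact Finset.sum_congr rfl fun ρ _ => sum_pathAmp_filter_res ha ρ

end Amplitudes

/-- Consistency of the decoherence functionals of an amplitude process: if `a` is a
transition amplitude (`∑ {a(x → y) : x → y} = 1` for every labeled causet `x`), then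
for all sets `A`, `B` of `n`-paths, `D_{n+1}(ext A, ext B) = D_n(A, B)`. -/
theorem decoherence_consistent {n : ℕ}
    (a : ∀ m, LCauset m → LCauset (m + 1) → ℂ)
    (ha : ∀ (m : ℕ) (x : LCauset m),
      ∑ y ∈ Finset.univ.filter (fun y => Produces x y), a m x y = 1)
    (A B : Finset (NPath n)) :
    decoherence a (extPaths A) (extPaths B) = decoherence a A B := by
  rw [decoherence, decoherence, sum_pathAmp_extPaths ha, sum_pathAmp_extPaths ha]
end
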